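/- Assume (A-1) and let κ ∈ ℝ be such that e^{−iκ} is an eigenvalue of U. Then: (i) every u ∈ H with Uu = e^{−iκ}u satisfies u(x) = 0 for all x ∉ Ω^i; (ii) for every θ ∈ ℂ with Im θ < 0, e^{−iκ} is an eigenvalue of U(θ). -/

import Mathlib

noncomputable section

namespace QWPaper

open Complex

/-- Sites of the two-dimensional lattice. -/
abbrev Site : Type := ℤ × ℤ

/-- Chirality indices: `0 = ←`, `1 = →`, `2 = ↓`, `3 = ↑`. -/
abbrev Chir : Type := Fin 4

abbrev V : Type := EuclideanSpace ℂ (Fin 4)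

/-- The Hilbert space `H = ℓ²(ℤ²; ℂ⁴)`. -/
abbrev H : Type := lp (fun _ : Site => V) 2

/-- The inner domain `Ω^i = {x : |x₁| ≤ M₀, |x₂| ≤ M₀}`. -/
def innerDom (M₀ : ℤ) : Set Site := {x | |x.1| ≤ M₀ ∧ |x.2| ≤ M₀}

/-- `S` is the shift operator:
`(Su)(x) = (u_←(x+e₁), u_→(x−e₁), u_↓(x+e₂), u_↑(x−e₂))`. -/
def IsShiftOp (S : H →L[ℂ] H) : Prop :=
  ∀ (u : H) (x : Site),
    (S u) x 0 = u (x.1 + 1, x.2) 0 ∧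
    (S u) x 1 = u (x.1 - 1, x.2) 1 ∧
    (S u) x 2 = u (x.1, x.2 + 1) 2 ∧
    (S u) x 3 = u (x.1, x.2 - 1) 3

/-- `A` is the bounded operator of pointwise multiplication by the matrix family `C`. -/
def IsCoinOp (A : H →L[ℂ] H) (C : Site → Matrix Chir Chir ℂ) : Prop :=
  ∀ (u : H) (x : Site) (i : Chir), (A u) x i = ∑ j : Chir, C x i j * u x j

/-- Every coin matrix is unitary. -/
def IsUnitaryCoin (C : Site → Matrix Chir Chir ℂ) : Prop :=
  ∀ x, C x ∈ Matrix.unitaryGroup Chir ℂ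

/-- Assumption (A-1): `C(x) = I₄` off `Ω^i`, with `M₀ ≥ 1`. -/
def SatisfiesA1 (C : Site → Matrix Chir Chir ℂ) (M₀ : ℤ) : Prop :=
  1 ≤ M₀ ∧ ∀ x, x ∉ innerDom M₀ → C x = 1

/-- `D_x(θ) = diag(e^{iθx₁}, e^{−iθx₁}, e^{iθx₂}, e^{−iθx₂})`. -/
def Dmat (θ : ℂ) (x : Site) : Matrix Chir Chir ℂ :=
  Matrix.diagonal ![Complex.exp (Complex.I * θ * x.1), Complex.exp (-(Complex.I * θ * x.1)),
    Complex.exp (Complex.I * θ * x.2), Complex.exp (-(Complex.I * θ * x.2))]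

/-- The translated coin `D_x(θ) C(x) D_x(θ)⁻¹`. -/
def transCoin (θ : ℂ) (C : Site → Matrix Chir Chir ℂ) (x : Site) : Matrix Chir Chir ℂ :=
  Dmat θ x * C x * (Dmat θ x)⁻¹

/-- The complex translated walk `U(θ) = e^{−iθ} S M(θ)`. -/
def transWalkOp (θ : ℂ) (S Mθ : H →L[ℂ] H) : H →L[ℂ] H :=
  Complex.exp (-(Complex.I * θ)) • (S.comp Mθ)

/-- `⟨x⟩ = (1 + |x|²)^{1/2}`. -/
def jnorm (x : Site) : ℝ := Real.sqrt (1 + ((x.1 : ℝ) ^ 2 + (x.2 : ℝ) ^ 2))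

/-- Super-exponentially decreasing elements of `H`: `e^{τ⟨x⟩} f ∈ H` for every `τ > 0`. -/
def SuperExpDecay (f : H) : Prop :=
  ∀ τ : ℝ, 0 < τ → Memℓp (fun x : Site => (Real.exp (τ * jnorm x) • f x : V)) 2

/-- Pointwise shift of an arbitrary `ℂ⁴`-valued map on `ℤ²`. -/
def ptShift (v : Site → Chir → ℂ) (x : Site) : Chir → ℂ :=
  ![v (x.1 + 1, x.2) 0, v (x.1 - 1, x.2) 1, v (x.1, x.2 + 1) 2, v (x.1, x.2 - 1) 3]

/-- Pointwise coin action on an arbitrary `ℂ⁴`-valued map on `ℤ²`. -/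
def ptCoin (C : Site → Matrix Chir Chir ℂ) (u : Site → Chir → ℂ) (x : Site) (i : Chir) : ℂ :=
  ∑ j : Chir, C x i j * u x j

/-- Pointwise action of the walk `U = SC` on arbitrary `ℂ⁴`-valued maps. -/
def ptWalk (C : Site → Matrix Chir Chir ℂ) (u : Site → Chir → ℂ) : Site → Chir → ℂ :=
  ptShift (ptCoin C u)

/-- `u` is a pointwise solution of `U u = e^{−iκ} u`. -/
def IsPtSolution (C : Site → Matrix Chir Chir ℂ) (κ : ℂ) (u : Site → Chir → ℂ) : Prop :=
  ∀ (x : Site) (i : Chir), ptWalk C u x i = Complex.exp (-(Complex.I * κ)) * u x i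

/-- `u` is outgoing with the explicit sequences `aL aR aD aU`. -/
def IsOutgoingWith (M₀ : ℤ) (κ : ℂ) (aL aR aD aU : ℤ → ℂ) (u : Site → Chir → ℂ) : Prop :=
  (∀ x : Site, x.1 < -M₀ → u x 0 = aL x.2 * Complex.exp (-(Complex.I * κ * x.1))) ∧
  (∀ x : Site, M₀ < x.1 → u x 0 = 0) ∧
  (∀ x : Site, x.1 < -M₀ → u x 1 = 0) ∧
  (∀ x : Site, M₀ < x.1 → u x 1 = aR x.2 * Complex.exp (Complex.I * κ * x.1)) ∧
  (∀ x : Site, x.2 < -M₀ → u x 2 = aD x.1 * Complex.exp (-(Complex.I * κ * x.2))) ∧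
  (∀ x : Site, M₀ < x.2 → u x 2 = 0) ∧
  (∀ x : Site, x.2 < -M₀ → u x 3 = 0) ∧
  (∀ x : Site, M₀ < x.2 → u x 3 = aU x.1 * Complex.exp (Complex.I * κ * x.2))

/-- `u` is an outgoing map. -/
def IsOutgoing (M₀ : ℤ) (κ : ℂ) (u : Site → Chir → ℂ) : Prop :=
  ∃ aL aR aD aU : ℤ → ℂ, IsOutgoingWith M₀ κ aL aR aD aU u

/-- Elastic coin: column `j` of `C_el(x)` is `e^{iα_j(x)} 𝐞_{σ(x)(j)}`. -/
def elasticCoin (σ : Site → Equiv.Perm Chir) (α : Site → Chir → ℝ) (x : Site) :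
    Matrix Chir Chir ℂ :=
  Matrix.of fun i j => if i = σ x j then Complex.exp (Complex.I * (α x j : ℂ)) else 0

/-- The initial state `δ_y 𝐞_j ∈ H`. -/
def deltaState (y : Site) (j : Chir) : H := lp.single 2 y (EuclideanSpace.single j 1)

/-- `(q, p)` is the trajectory map of the elastic walk `Uel`:
`Uel^t (δ_y 𝐞_j)` is a modulus-one multiple of `δ_{q(t,y,j)} 𝐞_{p(t,y,j)}`. -/
def IsTrajectory (Uel : unitary (H →L[ℂ] H))
    (q : ℤ → Site → Chir → Site) (p : ℤ → Site → Chir → Chir) : Prop :=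
  (∀ y j, q 0 y j = y ∧ p 0 y j = j) ∧
  ∀ (t : ℤ) (y : Site) (j : Chir), ∃ c : ℂ, ‖c‖ = 1 ∧
    ((Uel ^ t : unitary (H →L[ℂ] H)) : H →L[ℂ] H) (deltaState y j)
      = c • deltaState (q t y j) (p t y j)

/-- Euclidean norm of a lattice point. -/
def znorm (x : Site) : ℝ := Real.sqrt ((x.1 : ℝ) ^ 2 + (x.2 : ℝ) ^ 2)

/-- The parts of the barrier `K`. -/
def K1p (M₀ : ℤ) : Set Site := {x | x.1 = M₀ ∧ |x.2| ≤ M₀}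
def K1m (M₀ : ℤ) : Set Site := {x | x.1 = -M₀ ∧ |x.2| ≤ M₀}
def K2p (M₀ : ℤ) : Set Site := {x | x.2 = M₀ ∧ |x.1| ≤ M₀}
def K2m (M₀ : ℤ) : Set Site := {x | x.2 = -M₀ ∧ |x.1| ≤ M₀}
def Kbar (M₀ : ℤ) : Set Site := K1p M₀ ∪ K1m M₀ ∪ K2p M₀ ∪ K2m M₀

/-- The exterior domain `Ω^e = (ℤ² \ Ω^i) ∪ K`. -/
def outerDom (M₀ : ℤ) : Set Site := {x | x ∉ innerDom M₀} ∪ Kbar M₀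

/-- Membership in the interior space `H_i`. -/
def memHi (M₀ : ℤ) (u : H) : Prop :=
  (∀ x, x ∉ innerDom M₀ → ∀ i : Chir, u x i = 0) ∧
  (∀ x ∈ K1p M₀, u x 0 = 0) ∧ (∀ x ∈ K1m M₀, u x 1 = 0) ∧
  (∀ x ∈ K2p M₀, u x 2 = 0) ∧ (∀ x ∈ K2m M₀, u x 3 = 0)

/-- Membership in the exterior space `H_e`. -/
def memHe (M₀ : ℤ) (u : H) : Prop :=
  (∀ x, x ∉ outerDom M₀ → ∀ i : Chir, u x i = 0) ∧
  (∀ x ∈ K1m M₀ ∪ K2p M₀ ∪ K2m M₀, u x 0 = 0) ∧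
  (∀ x ∈ K1p M₀ ∪ K2p M₀ ∪ K2m M₀, u x 1 = 0) ∧
  (∀ x ∈ K2m M₀ ∪ K1p M₀ ∪ K1m M₀, u x 2 = 0) ∧
  (∀ x ∈ K2p M₀ ∪ K1p M₀ ∪ K1m M₀, u x 3 = 0)

/-- The non-penetrable barrier conditions for `U_np`. -/
def IsBarrierWalk (M₀ : ℤ) (Unp : H →L[ℂ] H) : Prop :=
  ∀ u : H,
    (∀ x ∈ K1p M₀, (Unp u) (x.1 + 1, x.2) 1 = u x 0) ∧
    (∀ x ∈ K1m M₀, (Unp u) (x.1 - 1, x.2) 0 = u x 0) ∧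
    (∀ x ∈ K2p M₀, (Unp u) (x.1, x.2 + 1) 3 = u x 2) ∧
    (∀ x ∈ K2m M₀, (Unp u) (x.1, x.2 - 1) 2 = u x 3)

/-- The rectangular loop `L_{ε,s}(μ)` (boundary of the rectangle with half-widths `a`, `b`). -/
def loopSet (μ a b : ℝ) : Set ℂ :=
  {κ | |κ.re - μ| ≤ a ∧ |κ.im| ≤ b ∧ (|κ.re - μ| = a ∨ |κ.im| = b)}

/-- The four-corner elastic coin. -/
def fourCornerCoin (m₀ n₀ : ℤ) (x : Site) : Matrix Chir Chir ℂ :=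
  if x = ((0 : ℤ), (0 : ℤ)) then !![0,1,0,0; 0,0,1,0; 0,0,0,1; 1,0,0,0]
  else if x = (m₀, (0 : ℤ)) then !![0,0,1,0; 1,0,0,0; 0,0,0,1; 0,1,0,0]
  else if x = (m₀, n₀) then !![0,0,0,1; 1,0,0,0; 0,1,0,0; 0,0,1,0]
  else if x = ((0 : ℤ), n₀) then !![0,1,0,0; 0,0,0,1; 1,0,0,0; 0,0,1,0]
  else 1

/-- The four corners. -/
def corners (m₀ n₀ : ℤ) : Set Site :=
  {((0 : ℤ), (0 : ℤ)), (m₀, (0 : ℤ)), (m₀, n₀), ((0 : ℤ), n₀)}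

/-- A perturbed four-corner coin `C_ε`. -/
def IsPerturbedFourCorner (m₀ n₀ : ℤ) (ε : ℝ) (Cε : Site → Matrix Chir Chir ℂ) : Prop :=
  IsUnitaryCoin Cε ∧
  (∀ x, x ∉ corners m₀ n₀ → Cε x = 1) ∧
  (∀ x ∈ corners m₀ n₀, ∀ i j : Chir, ‖Cε x i j - fourCornerCoin m₀ n₀ x i j‖ < ε) ∧
  Cε ((0 : ℤ), (0 : ℤ)) 1 0 = 0 ∧ Cε ((0 : ℤ), (0 : ℤ)) 3 2 = 0 ∧
  Cε (m₀, (0 : ℤ)) 3 2 = 0 ∧ Cε (m₀, (0 : ℤ)) 0 1 = 0 ∧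
  Cε (m₀, n₀) 2 3 = 0 ∧ Cε (m₀, n₀) 0 1 = 0 ∧
  Cε ((0 : ℤ), n₀) 1 0 = 0 ∧ Cε ((0 : ℤ), n₀) 2 3 = 0

/-- `c_ε⁺ = c_{↑,←}(0,0) c_{←,↓}(m₀,0) c_{↓,→}(m₀,n₀) c_{→,↑}(0,n₀)`. -/
def cPlus (m₀ n₀ : ℤ) (Cε : Site → Matrix Chir Chir ℂ) : ℂ :=
  Cε ((0 : ℤ), (0 : ℤ)) 3 0 * Cε (m₀, (0 : ℤ)) 0 2 * Cε (m₀, n₀) 2 1 * Cε ((0 : ℤ), n₀) 1 3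

/-- `c_ε⁻ = c_{→,↓}(0,0) c_{↑,→}(m₀,0) c_{←,↑}(m₀,n₀) c_{↓,←}(0,n₀)`. -/
def cMinus (m₀ n₀ : ℤ) (Cε : Site → Matrix Chir Chir ℂ) : ℂ :=
  Cε ((0 : ℤ), (0 : ℤ)) 1 2 * Cε (m₀, (0 : ℤ)) 3 1 * Cε (m₀, n₀) 0 3 * Cε ((0 : ℤ), n₀) 2 0

/-- `u ∈ H` is supported on the set `A ⊆ ℤ² × {←,→,↓,↑}`. -/
def SupportedOn (u : H) (A : Set (Site × Chir)) : Prop :=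
  ∀ (x : Site) (i : Chir), (x, i) ∉ A → u x i = 0

/-- The image of the closed trajectory `Φ₊` of the four-corner walk. -/
def imPhiPlus (m₀ n₀ : ℤ) : Set (Site × Chir) :=
  {w | ∃ t : ℤ, 1 ≤ t ∧ t ≤ n₀ ∧ w = (((0 : ℤ), t), (3 : Chir))} ∪
  {w | ∃ t : ℤ, 1 ≤ t ∧ t ≤ m₀ ∧ w = ((t, n₀), (1 : Chir))} ∪
  {w | ∃ t : ℤ, 0 ≤ t ∧ t ≤ n₀ - 1 ∧ w = ((m₀, t), (2 : Chir))} ∪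
  {w | ∃ t : ℤ, 0 ≤ t ∧ t ≤ m₀ - 1 ∧ w = ((t, (0 : ℤ)), (0 : Chir))}

/-- The image of the reversed closed trajectory `Φ₋` of the four-corner walk. -/
def imPhiMinus (m₀ n₀ : ℤ) : Set (Site × Chir) :=
  {w | ∃ t : ℤ, 1 ≤ t ∧ t ≤ m₀ ∧ w = ((t, (0 : ℤ)), (1 : Chir))} ∪
  {w | ∃ t : ℤ, 1 ≤ t ∧ t ≤ n₀ ∧ w = ((m₀, t), (3 : Chir))} ∪
  {w | ∃ t : ℤ, 0 ≤ t ∧ t ≤ m₀ - 1 ∧ w = ((t, n₀), (0 : Chir))} ∪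
  {w | ∃ t : ℤ, 0 ≤ t ∧ t ≤ n₀ - 1 ∧ w = (((0 : ℤ), t), (2 : Chir))}

/-- The eight outgoing tails starting from the four corners. -/
def tails (m₀ n₀ : ℤ) : Set (Site × Chir) :=
  {w | ∃ N y₂ : ℤ, 1 ≤ N ∧ (y₂ = 0 ∨ y₂ = n₀) ∧ w = ((-N, y₂), (0 : Chir))} ∪
  {w | ∃ N y₁ : ℤ, 1 ≤ N ∧ (y₁ = 0 ∨ y₁ = m₀) ∧ w = ((y₁, n₀ + N), (3 : Chir))} ∪
  {w | ∃ N y₁ : ℤ, 1 ≤ N ∧ (y₁ = 0 ∨ y₁ = m₀) ∧ w = ((y₁, -N), (2 : Chir))} ∪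
  {w | ∃ N y₂ : ℤ, 1 ≤ N ∧ (y₂ = 0 ∨ y₂ = n₀) ∧ w = ((m₀ + N, y₂), (1 : Chir))}

/-- The shape resonance perturbation `C_ε` of the barrier coin `C_np`. -/
def IsShapePerturbation (M₀ : ℤ) (Cnp : Site → Matrix Chir Chir ℂ) (ε : ℝ)
    (Cε : Site → Matrix Chir Chir ℂ) : Prop :=
  IsUnitaryCoin Cε ∧ (∀ x, x ∉ Kbar M₀ → Cε x = Cnp x) ∧
  (∀ x ∈ Kbar M₀, ∀ i j : Chir, ‖Cε x i j - Cnp x i j‖ < ε)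

/-- Counterclockwise contour integral of an operator-valued map over the boundary of the
rectangle centered at `μ ∈ ℝ` with half-widths `a` and `b`. -/
def rectIntegral (f : ℂ → (H →L[ℂ] H)) (μ a b : ℝ) : H →L[ℂ] H :=
  ((∫ t in (μ - a)..(μ + a), f (t - b * Complex.I)) -
      (∫ t in (μ - a)..(μ + a), f (t + b * Complex.I))) +
  Complex.I • ((∫ s in (-b)..b, f ((μ + a : ℝ) + s * Complex.I)) -
      (∫ s in (-b)..b, f ((μ - a : ℝ) + s * Complex.I)))

/-- The Riesz-type projection `(1/2π) ∮ e^{−iκ} (A − e^{−iκ})^{−1} dκ` over the rectangular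
loop of half-widths `a`, `b` around `μ`. -/
def rieszProj (A : H →L[ℂ] H) (μ a b : ℝ) : H →L[ℂ] H :=
  (1 / (2 * Real.pi)) •
    rectIntegral (fun κ => Complex.exp (-(Complex.I * κ)) •
      Ring.inverse (A - Complex.exp (-(Complex.I * κ)) • (1 : H →L[ℂ] H))) μ a b

/-! Off `Ω^i` the coin is the identity, so an eigenvector `u` of `U` for the eigenvalue `e^{−iκ}`
satisfies `u_i(x + shiftVec i) = e^{−iκ} u_i(x)` there. Since `κ` is real, each component has
constant modulus along a lattice ray that avoids the box `Ω^i`, and square summability forces it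
to vanish. Hence `u` is finitely supported, so `D(θ) u` lies in `H` for every `θ`, and since
`U(θ) = D(θ) U D(θ)⁻¹` it is an eigenvector of `U(θ)` for the same eigenvalue. -/

theorem lp.eq_zero_of_le_norm_comp_injective {ι : Type*} {E : ι → Type*}
    [∀ i, NormedAddCommGroup (E i)] {p : ENNReal} (hp : 0 < p.toReal) (u : lp E p)
    {g : ℕ → ι} (hg : Function.Injective g) {c : ℝ} (hc₀ : 0 ≤ c) (hc : ∀ n, c ≤ ‖u (g n)‖) :
    c = 0 := by
  have hsum : Summable fun _ : ℕ => c ^ p.toReal :=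
    (((lp.memℓp u).summable hp).comp_injective hg).of_nonneg_of_le
      (fun _ => by positivity) fun n => Real.rpow_le_rpow hc₀ (hc n) hp.le
  exact (Real.rpow_eq_zero hc₀ hp.ne').mp ((summable_const_iff _).mp hsum)

theorem abs_le_of_abs_add_mul_le_of_abs_sub_mul_le {a c M : ℤ} {m n : ℕ}
    (h₁ : |a + m * c| ≤ M) (h₂ : |a - n * c| ≤ M) : |a| ≤ M := by
  rcases Nat.eq_zero_or_pos m with rfl | hm
  · simpa using h₁
  rw [abs_le] at *
  constructor <;> nlinarith

theorem innerDom_finite (M₀ : ℤ) : (innerDom M₀).Finite :=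
  ((Set.finite_Icc (-M₀) M₀).prod (Set.finite_Icc (-M₀) M₀)).subset fun x hx => by
    simpa only [innerDom, Set.mem_ofPred_eq, abs_le, Set.mem_prod, Set.mem_Icc] using hx

theorem forall_add_nsmul_notMem_innerDom_or {M₀ : ℤ} {x : Site} (hx : x ∉ innerDom M₀)
    (d : Site) :
    (∀ n : ℕ, x + n • d ∉ innerDom M₀) ∨ ∀ n : ℕ, x + n • (-d) ∉ innerDom M₀ := by
  by_contra! h
  obtain ⟨⟨m, hm⟩, ⟨n, hn⟩⟩ := h
  simp only [innerDom, nsmul_eq_mul, Set.mem_ofPred_eq, Prod.fst_add, Prod.fst_mul,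
    Prod.fst_natCast, Prod.snd_add, Prod.snd_mul, Prod.snd_natCast, smul_neg, ← sub_eq_add_neg,
    Prod.fst_sub, Prod.snd_sub] at hm hn
  exact hx ⟨abs_le_of_abs_add_mul_le_of_abs_sub_mul_le hm.1 hn.1,
    abs_le_of_abs_add_mul_le_of_abs_sub_mul_le hm.2 hn.2⟩

theorem add_nsmul_injective {x d : Site} (hd : d ≠ 0) :
    Function.Injective fun n : ℕ => x + n • d := by
  have := (add_right_injective x).comp ((smul_left_injective ℤ hd).comp Nat.cast_injective)
  simpa only [Function.comp_def, natCast_zsmul] using this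

theorem apply_eq_zero_of_norm_apply_const_on_ray (u : H) (i : Chir) {x d : Site} (hd : d ≠ 0)
    (h : ∀ n : ℕ, ‖u (x + (n + 1) • d) i‖ = ‖u (x + n • d) i‖) : u x i = 0 := by
  have hconst : ∀ n : ℕ, ‖u (x + n • d) i‖ = ‖u x i‖ := by
    intro n
    induction n with
    | zero => simp
    | succ n ih => rw [h, ih]
  have := lp.eq_zero_of_le_norm_comp_injective (by norm_num) u (add_nsmul_injective hd)
    (norm_nonneg (u x i)) fun n => (hconst n).symm.le.trans (PiLp.norm_apply_le _ _)
  exact norm_eq_zero.mp this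

def shiftVec : Chir → Site := ![(1, 0), (-1, 0), (0, 1), (0, -1)]

theorem shiftVec_ne_zero (i : Chir) : shiftVec i ≠ 0 := by
  fin_cases i <;> simp [shiftVec]

theorem IsShiftOp.apply_eq {S : H →L[ℂ] H} (hS : IsShiftOp S) (u : H) (x : Site) (i : Chir) :
    S u x i = u (x + shiftVec i) i := by
  obtain ⟨h₀, h₁, h₂, h₃⟩ := hS u x
  obtain ⟨a, b⟩ := x
  fin_cases i <;> simp [shiftVec, h₀, h₁, h₂, h₃, sub_eq_add_neg]

theorem IsCoinOp.apply_of_eq_one {A : H →L[ℂ] H} {C : Site → Matrix Chir Chir ℂ}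
    (hA : IsCoinOp A C) (u : H) {x : Site} (hx : C x = 1) (i : Chir) : A u x i = u x i := by
  simp [hA u x i, hx, Matrix.one_apply]

section Eigenvector

variable {S Cop : H →L[ℂ] H} {C : Site → Matrix Chir Chir ℂ} {u : H} {lam : ℂ}

theorem apply_add_shiftVec_of_eigen (hS : IsShiftOp S) (hCop : IsCoinOp Cop C)
    (hu : S.comp Cop u = lam • u) {x : Site} (i : Chir) (hx : C (x + shiftVec i) = 1) :
    u (x + shiftVec i) i = lam * u x i := by
  have := congrArg (fun w : H => w x i) hu
  simpa [hS.apply_eq, hCop.apply_of_eq_one u hx] using this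

theorem eigenvector_apply_eq_zero_of_notMem_innerDom {M₀ : ℤ} (hS : IsShiftOp S) (hCop : IsCoinOp Cop C)
    (hC : ∀ x, x ∉ innerDom M₀ → C x = 1) (hlam : ‖lam‖ = 1) (hu : S.comp Cop u = lam • u)
    {x : Site} (hx : x ∉ innerDom M₀) (i : Chir) : u x i = 0 := by
  set d := shiftVec i
  have step : ∀ y, y + d ∉ innerDom M₀ → ‖u (y + d) i‖ = ‖u y i‖ := fun y hy => by
    rw [apply_add_shiftVec_of_eigen hS hCop hu i (hC _ hy), norm_mul, hlam, one_mul]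
  rcases forall_add_nsmul_notMem_innerDom_or hx d with hfwd | hbwd
  · refine apply_eq_zero_of_norm_apply_const_on_ray u i (shiftVec_ne_zero i) fun n => ?_
    rw [succ_nsmul, ← add_assoc]
    exact step _ (by simpa only [succ_nsmul, add_assoc] using hfwd (n + 1))
  · refine apply_eq_zero_of_norm_apply_const_on_ray u i (neg_ne_zero.mpr (shiftVec_ne_zero i))
      fun n => ?_
    have hshift : x + (n + 1) • -d + d = x + n • -d := by rw [succ_nsmul]; abel
    rw [← step _ (hshift ▸ hbwd n), hshift]

end Eigenvector

/-- `D_x(θ) = diagonal (phase θ x)`. Writing the exponent as `⟨x, shiftVec i⟩` makes the shift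
multiply every phase by the same factor `e^{iθ}`. -/
def phase (θ : ℂ) (x : Site) (i : Chir) : ℂ :=
  Complex.exp (Complex.I * θ * ((x.1 * (shiftVec i).1 + x.2 * (shiftVec i).2 : ℤ) : ℂ))

theorem phase_ne_zero (θ : ℂ) (x : Site) (i : Chir) : phase θ x i ≠ 0 :=
  Complex.exp_ne_zero _

theorem phase_neg_mul_phase (θ : ℂ) (x : Site) (i : Chir) : phase (-θ) x i * phase θ x i = 1 := by
  rw [phase, phase, ← Complex.exp_add, ← Complex.exp_zero]
  ring_nf

theorem phase_add_shiftVec (θ : ℂ) (x : Site) (i : Chir) :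
    phase θ (x + shiftVec i) i = Complex.exp (Complex.I * θ) * phase θ x i := by
  have hpair : (x + shiftVec i).1 * (shiftVec i).1 + (x + shiftVec i).2 * (shiftVec i).2
      = x.1 * (shiftVec i).1 + x.2 * (shiftVec i).2 + 1 := by
    fin_cases i <;> simp [shiftVec] <;> ring
  rw [phase, phase, hpair, ← Complex.exp_add]
  push_cast
  ring_nf

theorem Dmat_eq_diagonal_phase (θ : ℂ) (x : Site) : Dmat θ x = Matrix.diagonal (phase θ x) := by
  rw [Dmat]
  congr 1
  funext i
  fin_cases i <;> simp [phase, shiftVec]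

theorem Dmat_inv (θ : ℂ) (x : Site) : (Dmat θ x)⁻¹ = Dmat (-θ) x := by
  refine Matrix.inv_eq_right_inv ?_
  rw [Dmat_eq_diagonal_phase, Dmat_eq_diagonal_phase, Matrix.diagonal_mul_diagonal,
    ← Matrix.diagonal_one]
  congr 1
  funext i
  rw [mul_comm, phase_neg_mul_phase]

theorem transCoin_apply (θ : ℂ) (C : Site → Matrix Chir Chir ℂ) (x : Site) (i j : Chir) :
    transCoin θ C x i j = phase θ x i * C x i j * phase (-θ) x j := by
  rw [transCoin, Dmat_inv, Dmat_eq_diagonal_phase, Dmat_eq_diagonal_phase, Matrix.mul_diagonal,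
    Matrix.diagonal_mul]

theorem exists_phase_mul (θ : ℂ) (u : H) {s : Set Site} (hs : s.Finite)
    (hu : ∀ y, y ∉ s → ∀ j, u y j = 0) : ∃ v : H, ∀ y j, v y j = phase θ y j * u y j := by
  refine ⟨⟨fun y => WithLp.toLp 2 fun j => phase θ y j * u y j, ?_⟩, fun _ _ => rfl⟩
  refine (memℓp_zero (hs.subset fun y hy => ?_)).of_exponent_ge bot_le
  by_contra hys
  exact hy (PiLp.ext fun j => by simp [hu y hys j])

section Conjugation

variable {S Cop Mθ : H →L[ℂ] H} {C : Site → Matrix Chir Chir ℂ} {θ : ℂ} {u v : H}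

theorem IsCoinOp.apply_of_transCoin (hM : IsCoinOp Mθ (transCoin θ C)) (hCop : IsCoinOp Cop C)
    (hv : ∀ y j, v y j = phase θ y j * u y j) (y : Site) (i : Chir) :
    Mθ v y i = phase θ y i * Cop u y i := by
  rw [hM v y i, hCop u y i, Finset.mul_sum]
  refine Finset.sum_congr rfl fun j _ => ?_
  rw [transCoin_apply, hv]
  linear_combination (phase θ y i * C y i j * u y j) * phase_neg_mul_phase θ y j

/-- `U(θ) = D(θ) U D(θ)⁻¹`: the factor `e^{−iθ}` cancels the phase picked up by one shift. -/
theorem transWalkOp_apply_of_phase (hS : IsShiftOp S) (hCop : IsCoinOp Cop C)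
    (hM : IsCoinOp Mθ (transCoin θ C)) (hv : ∀ y j, v y j = phase θ y j * u y j)
    (x : Site) (i : Chir) :
    transWalkOp θ S Mθ v x i = phase θ x i * S.comp Cop u x i := by
  have hexp : Complex.exp (-(Complex.I * θ)) * Complex.exp (Complex.I * θ) = 1 := by
    rw [← Complex.exp_add, neg_add_cancel, Complex.exp_zero]
  simp only [transWalkOp, FunLike.coe_smul, Pi.smul_apply, ContinuousLinearMap.comp_apply,
    lp.coeFn_smul, PiLp.smul_apply, smul_eq_mul, hS.apply_eq,
    hM.apply_of_transCoin hCop hv, phase_add_shiftVec]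
  linear_combination (phase θ x i * Cop u (x + shiftVec i) i) * hexp

theorem exists_eigenvector_transWalkOp (hS : IsShiftOp S) (hCop : IsCoinOp Cop C)
    (hM : IsCoinOp Mθ (transCoin θ C)) {lam : ℂ} (hu₀ : u ≠ 0) (hu : S.comp Cop u = lam • u)
    {s : Set Site} (hs : s.Finite) (hsupp : ∀ y, y ∉ s → ∀ j, u y j = 0) :
    ∃ v : H, v ≠ 0 ∧ transWalkOp θ S Mθ v = lam • v := by
  obtain ⟨v, hv⟩ := exists_phase_mul θ u hs hsupp
  refine ⟨v, ?_, ?_⟩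
  · rintro rfl
    refine hu₀ (lp.ext (funext fun y => PiLp.ext fun j => ?_))
    have := hv y j
    simp only [lp.coeFn_zero, Pi.zero_apply, PiLp.zero_apply, zero_eq_mul] at this ⊢
    exact this.resolve_left (phase_ne_zero θ y j)
  · refine lp.ext (funext fun x => PiLp.ext fun i => ?_)
    have hux := congrArg (fun w : H => w x i) hu
    simp only [lp.coeFn_smul, Pi.smul_apply, PiLp.smul_apply, smul_eq_mul] at hux ⊢
    rw [transWalkOp_apply_of_phase hS hCop hM hv, hux, hv]
    ring

end Conjugation

theorem embedded_eigenvalue_support_and_invariance_general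
    (M₀ : ℤ) (C : Site → Matrix Chir Chir ℂ)
    (hA1 : SatisfiesA1 C M₀)
    (S Cop : H →L[ℂ] H) (hS : IsShiftOp S) (hCop : IsCoinOp Cop C)
    (κ : ℝ)
    (hev : ∃ u : H, u ≠ 0 ∧ (S.comp Cop) u = Complex.exp (-(Complex.I * (κ : ℂ))) • u) :
    (∀ u : H, (S.comp Cop) u = Complex.exp (-(Complex.I * (κ : ℂ))) • u →
      ∀ x, x ∉ innerDom M₀ → ∀ i : Chir, u x i = 0) ∧
    ∀ θ : ℂ, θ.im < 0 → ∀ Mθ : H →L[ℂ] H, IsCoinOp Mθ (transCoin θ C) →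
      ∃ v : H, v ≠ 0 ∧ (transWalkOp θ S Mθ) v = Complex.exp (-(Complex.I * (κ : ℂ))) • v := by
  have hlam : ‖Complex.exp (-(Complex.I * (κ : ℂ)))‖ = 1 := by
    rw [Complex.norm_exp]
    simp
  have hsupp : ∀ u : H, (S.comp Cop) u = Complex.exp (-(Complex.I * (κ : ℂ))) • u →
      ∀ x, x ∉ innerDom M₀ → ∀ i : Chir, u x i = 0 := fun u hu x hx =>
    eigenvector_apply_eq_zero_of_notMem_innerDom hS hCop hA1.2 hlam hu hx
  refine ⟨hsupp, fun θ _ Mθ hM => ?_⟩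
  obtain ⟨u, hu₀, hu⟩ := hev
  exact exists_eigenvector_transWalkOp hS hCop hM hu₀ hu (innerDom_finite M₀) (hsupp u hu)

/-- if `e^{−iκ}`, `κ ∈ ℝ`, is an eigenvalue of `U`, then every eigenfunction is
supported in `Ω^i`, and `e^{−iκ}` is an eigenvalue of `U(θ)` for every `θ` with `Im θ < 0`. -/
theorem embedded_eigenvalue_support_and_invariance
    (M₀ : ℤ) (C : Site → Matrix Chir Chir ℂ)
    (hC : IsUnitaryCoin C) (hA1 : SatisfiesA1 C M₀)
    (S Cop : H →L[ℂ] H) (hS : IsShiftOp S) (hCop : IsCoinOp Cop C)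
    (hUnit : S.comp Cop ∈ unitary (H →L[ℂ] H))
    (κ : ℝ)
    (hev : ∃ u : H, u ≠ 0 ∧ (S.comp Cop) u = Complex.exp (-(Complex.I * (κ : ℂ))) • u) :
    (∀ u : H, (S.comp Cop) u = Complex.exp (-(Complex.I * (κ : ℂ))) • u →
      ∀ x, x ∉ innerDom M₀ → ∀ i : Chir, u x i = 0) ∧
    ∀ θ : ℂ, θ.im < 0 → ∀ Mθ : H →L[ℂ] H, IsCoinOp Mθ (transCoin θ C) →
      ∃ v : H, v ≠ 0 ∧ (transWalkOp θ S Mθ) v = Complex.exp (-(Complex.I * (κ : ℂ))) • v :=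
  embedded_eigenvalue_support_and_invariance_general M₀ C hA1 S Cop hS hCop κ hev

end QWPaper
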